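/- arXiv:1111.7123 — 5 statements merged into one kernel-verified Lean document; each statement's English description precedes it below -/
import Mathlib

section
/- Let μ ≥ 0 be a finite measure on a measurable space T, x ∈ L¹₊(μ) with x ≠ 0, and a_i ∈ L¹(μ), i ∈ I finite, functions with ∫_T |a_i| x dμ < ∞ and such that the family (a_i)_{i∈I} is linearly independent on every measurable subset of positive measure. Then there exists a sequence (y_k)_{k ≥ k₀} in L^∞(μ) with: x_k := min(x,k) + y_k ≥ 0 a.e., ∫_T a_i x_k dμ = ∫_T a_i x dμ for all i ∈ I, |y_k| ≤ x a.e., and y_k → 0 a.e. -/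
open MeasureTheory Filter Matrix Topology

/-!
Take the weight `w = min(x, 1) / (1 + ∑ |aᵢ|)²`: it is positive exactly where `x` is, and it
makes `aᵢ w` and `aᵢ aⱼ w` dominated by `min(x, 1)`. The Gram matrix `Gᵢⱼ = ∫ aᵢ aⱼ w dμ` is
invertible, because `c ⬝ G c = ∫ (∑ cᵢ aᵢ)² w dμ` vanishes only if `∑ cᵢ aᵢ = 0` on `{x > 0}`.
Truncating `x` at level `k` changes the moments by a defect `εₖ → 0` (dominated convergence),
which the correction `yₖ = (∑ dⱼ aⱼ) w` with `G d = εₖ` restores. Since `d → 0` and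
`|yₖ| ≤ (∑ |dⱼ|) min(x, 1)`, for large `k` we get `|yₖ| ≤ min(x, 1) ≤ min(x, k)`.
-/

theorem Matrix.exists_tendsto_zero_mulVec_eq {ι α K : Type*} [Fintype ι] [Field K]
    [TopologicalSpace K] [IsTopologicalRing K] {A : Matrix ι ι K}
    (hA : Function.Injective A.mulVec) {l : Filter α} {ε : α → ι → K}
    (hε : Tendsto ε l (𝓝 0)) :
    ∃ d : α → ι → K, (∀ k, A *ᵥ d k = ε k) ∧ Tendsto d l (𝓝 0) := by
  classical
  have hdet := (isUnit_iff_isUnit_det A).1 (mulVec_injective_iff_isUnit.1 hA)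
  refine ⟨fun k => A⁻¹ *ᵥ ε k,
    fun k => by rw [mulVec_mulVec, mul_nonsing_inv A hdet, one_mulVec], ?_⟩
  simpa [Function.comp_def] using
    ((continuous_const.matrix_mulVec continuous_id).tendsto 0).comp hε

section WeightedGram

variable {T ι : Type*} [Fintype ι] {b : ι → T → ℝ} {w : T → ℝ}

theorem mul_sum_mul_eq_sum (c : ι → ℝ) (i : ι) (t : T) :
    b i t * ((∑ j, c j * b j t) * w t) = ∑ j, c j * (b i t * b j t * w t) := by
  rw [Finset.sum_mul, Finset.mul_sum]
  exact Finset.sum_congr rfl fun j _ => by ring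

theorem sq_sum_mul_eq_sum (c : ι → ℝ) (t : T) :
    (∑ i, c i * b i t) ^ 2 * w t = ∑ i, c i * (b i t * ((∑ j, c j * b j t) * w t)) := by
  rw [sq, Finset.sum_mul, Finset.sum_mul]
  exact Finset.sum_congr rfl fun i _ => by ring

variable [MeasurableSpace T] {μ : Measure T}

noncomputable def weightedGram (μ : Measure T) (b : ι → T → ℝ) (w : T → ℝ) : Matrix ι ι ℝ :=
  fun i j => ∫ t, b i t * b j t * w t ∂μ

theorem integrable_mul_sum_mul (hb : ∀ i j, Integrable (fun t => b i t * b j t * w t) μ)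
    (c : ι → ℝ) (i : ι) :
    Integrable (fun t => b i t * ((∑ j, c j * b j t) * w t)) μ := by
  simp_rw [mul_sum_mul_eq_sum]
  exact integrable_finsetSum _ fun j _ => (hb i j).const_mul (c j)

theorem weightedGram_mulVec (hb : ∀ i j, Integrable (fun t => b i t * b j t * w t) μ)
    (c : ι → ℝ) (i : ι) :
    (weightedGram μ b w *ᵥ c) i = ∫ t, b i t * ((∑ j, c j * b j t) * w t) ∂μ := by
  simp_rw [mul_sum_mul_eq_sum, integral_finsetSum _ fun j _ => (hb i j).const_mul (c j),
    integral_const_mul]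
  exact Finset.sum_congr rfl fun j _ => mul_comm _ _

theorem integrable_sq_sum_mul (hb : ∀ i j, Integrable (fun t => b i t * b j t * w t) μ)
    (c : ι → ℝ) :
    Integrable (fun t => (∑ i, c i * b i t) ^ 2 * w t) μ := by
  simp_rw [sq_sum_mul_eq_sum]
  exact integrable_finsetSum _ fun i _ => (integrable_mul_sum_mul hb c i).const_mul (c i)

theorem dotProduct_weightedGram_mulVec
    (hb : ∀ i j, Integrable (fun t => b i t * b j t * w t) μ) (c : ι → ℝ) :
    c ⬝ᵥ (weightedGram μ b w *ᵥ c) = ∫ t, (∑ i, c i * b i t) ^ 2 * w t ∂μ := by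
  simp_rw [sq_sum_mul_eq_sum,
    integral_finsetSum _ fun i _ => (integrable_mul_sum_mul hb c i).const_mul (c i),
    integral_const_mul, ← weightedGram_mulVec hb]
  rfl

theorem weightedGram_mulVec_injective
    (hb : ∀ i j, Integrable (fun t => b i t * b j t * w t) μ) {Z : Set T} (hw : 0 ≤ᵐ[μ] w)
    (hZ : ∀ᵐ t ∂μ, t ∈ Z → 0 < w t)
    (hindep : ∀ c : ι → ℝ, (∀ᵐ t ∂μ, t ∈ Z → ∑ i, c i * b i t = 0) → c = 0) :
    Function.Injective (weightedGram μ b w).mulVec := by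
  have hker : ∀ c, weightedGram μ b w *ᵥ c = 0 → c = 0 := by
    intro c hc
    have hzero : ∫ t, (∑ i, c i * b i t) ^ 2 * w t ∂μ = 0 := by
      rw [← dotProduct_weightedGram_mulVec hb, hc, dotProduct_zero]
    have hnonneg : 0 ≤ᵐ[μ] fun t => (∑ i, c i * b i t) ^ 2 * w t := by
      filter_upwards [hw] with t ht using mul_nonneg (sq_nonneg _) ht
    apply hindep c
    filter_upwards [(integral_eq_zero_iff_of_nonneg_ae hnonneg (integrable_sq_sum_mul hb c)).1
      hzero, hZ] with t ht hwt htZ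
    exact pow_eq_zero_iff two_ne_zero |>.1 ((mul_eq_zero.1 ht).resolve_right (hwt htZ).ne')
  exact fun c c' h => sub_eq_zero.1 (hker _ (by rw [mulVec_sub, h, sub_self]))

end WeightedGram

section DampedWeight

variable {T ι : Type*} [Fintype ι] {a : ι → T → ℝ} {x : T → ℝ} {t : T}

noncomputable def dampedWeight (a : ι → T → ℝ) (x : T → ℝ) (t : T) : ℝ :=
  min (x t) 1 / (1 + ∑ i, |a i t|) ^ 2

theorem one_le_one_add_sum_abs (a : ι → T → ℝ) (t : T) : 1 ≤ 1 + ∑ j, |a j t| :=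
  le_add_of_nonneg_right (Finset.sum_nonneg fun j _ => abs_nonneg (a j t))

theorem abs_le_one_add_sum_abs (a : ι → T → ℝ) (t : T) (i : ι) :
    |a i t| ≤ 1 + ∑ j, |a j t| := by
  have := Finset.single_le_sum (fun j _ => abs_nonneg (a j t)) (Finset.mem_univ i)
  linarith

theorem dampedWeight_nonneg (hx : 0 ≤ x t) : 0 ≤ dampedWeight a x t :=
  div_nonneg (le_min hx zero_le_one) (sq_nonneg _)

theorem dampedWeight_pos (hx : 0 < x t) : 0 < dampedWeight a x t :=
  div_pos (lt_min hx one_pos) (pow_pos (by positivity) 2)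

theorem abs_mul_abs_mul_dampedWeight_le (hx : 0 ≤ x t) (i j : ι) :
    |a i t| * |a j t| * dampedWeight a x t ≤ min (x t) 1 := by
  have hs := one_le_one_add_sum_abs a t
  calc |a i t| * |a j t| * dampedWeight a x t
      ≤ (1 + ∑ k, |a k t|) * (1 + ∑ k, |a k t|) * dampedWeight a x t := by
        gcongr
        · exact dampedWeight_nonneg hx
        · exact abs_le_one_add_sum_abs a t i
        · exact abs_le_one_add_sum_abs a t j
    _ = min (x t) 1 := by
        unfold dampedWeight
        field_simp

theorem abs_mul_dampedWeight_le (hx : 0 ≤ x t) (i : ι) :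
    |a i t| * dampedWeight a x t ≤ min (x t) 1 := by
  have hs := one_le_one_add_sum_abs a t
  calc |a i t| * dampedWeight a x t ≤ (1 + ∑ k, |a k t|) * dampedWeight a x t := by
        gcongr
        · exact dampedWeight_nonneg hx
        · exact abs_le_one_add_sum_abs a t i
    _ = min (x t) 1 / (1 + ∑ k, |a k t|) := by
        unfold dampedWeight
        field_simp
    _ ≤ min (x t) 1 := div_le_self (le_min hx zero_le_one) hs

theorem abs_sum_mul_dampedWeight_le (hx : 0 ≤ x t) (d : ι → ℝ) :
    |(∑ j, d j * a j t) * dampedWeight a x t| ≤ (∑ j, |d j|) * min (x t) 1 := by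
  have hw := dampedWeight_nonneg (a := a) hx
  rw [abs_mul, abs_of_nonneg hw]
  calc |∑ j, d j * a j t| * dampedWeight a x t
      ≤ ∑ j, |d j| * (|a j t| * dampedWeight a x t) := by
        rw [Finset.sum_congr rfl fun j _ => (mul_assoc |d j| _ _).symm, ← Finset.sum_mul]
        gcongr
        exact (Finset.abs_sum_le_sum_abs _ _).trans_eq (by simp_rw [abs_mul])
    _ ≤ (∑ j, |d j|) * min (x t) 1 := by
        rw [Finset.sum_mul]
        gcongr with j
        exact abs_mul_dampedWeight_le hx j

variable [MeasurableSpace T] {μ : Measure T}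

theorem aestronglyMeasurable_dampedWeight (ha : ∀ i, AEStronglyMeasurable (a i) μ)
    (hx : AEStronglyMeasurable x μ) : AEStronglyMeasurable (dampedWeight a x) μ := by
  have hxa := hx.aemeasurable
  have haa i := (ha i).aemeasurable
  exact AEMeasurable.aestronglyMeasurable (by unfold dampedWeight; fun_prop)

theorem integrable_mul_mul_dampedWeight (ha : ∀ i, AEStronglyMeasurable (a i) μ)
    (hx : Integrable x μ) (hx0 : 0 ≤ᵐ[μ] x) (i j : ι) :
    Integrable (fun t => a i t * a j t * dampedWeight a x t) μ := by
  refine hx.mono' (((ha i).mul (ha j)).mul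
    (aestronglyMeasurable_dampedWeight ha hx.aestronglyMeasurable)) ?_
  filter_upwards [hx0] with t ht
  rw [Real.norm_eq_abs, abs_mul, abs_mul, abs_of_nonneg (dampedWeight_nonneg ht)]
  exact (abs_mul_abs_mul_dampedWeight_le ht i j).trans (min_le_left _ _)

theorem memLp_top_sum_mul_dampedWeight (ha : ∀ i, AEStronglyMeasurable (a i) μ)
    (hx : AEStronglyMeasurable x μ) (hx0 : 0 ≤ᵐ[μ] x) (d : ι → ℝ) :
    MemLp (fun t => (∑ j, d j * a j t) * dampedWeight a x t) ⊤ μ := by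
  refine memLp_top_of_bound ((Finset.aestronglyMeasurable_fun_sum _ fun j _ =>
    (ha j).const_mul _).mul (aestronglyMeasurable_dampedWeight ha hx)) (∑ j, |d j|) ?_
  filter_upwards [hx0] with t ht
  exact (abs_sum_mul_dampedWeight_le ht d).trans (mul_le_of_le_one_right
    (Finset.sum_nonneg fun j _ => abs_nonneg _) (min_le_right _ _))

theorem eventually_ae_abs_sum_mul_dampedWeight_le {α : Type*} {l : Filter α}
    {d : α → ι → ℝ} (hx0 : 0 ≤ᵐ[μ] x) (hd : Tendsto d l (𝓝 0)) :
    ∀ᶠ k in l, ∀ᵐ t ∂μ, |(∑ j, d k j * a j t) * dampedWeight a x t| ≤ min (x t) 1 := by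
  have hsum : Tendsto (fun k => ∑ j, |d k j|) l (𝓝 0) := by
    simpa using tendsto_finsetSum _ fun j _ => (tendsto_pi_nhds.1 hd j).abs
  filter_upwards [hsum.eventually (eventually_le_nhds one_pos)] with k hk
  filter_upwards [hx0] with t ht
  exact (abs_sum_mul_dampedWeight_le ht _).trans
    (mul_le_of_le_one_left (le_min ht zero_le_one) hk)

theorem weightedGram_dampedWeight_mulVec_injective (ha : ∀ i, AEStronglyMeasurable (a i) μ)
    (hx : Integrable x μ) (hx0 : 0 ≤ᵐ[μ] x) (hxne : ¬ (x =ᵐ[μ] 0))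
    (hindep : ∀ Z : Set T, MeasurableSet Z → 0 < μ Z →
      ∀ c : ι → ℝ, (∀ᵐ t ∂μ, t ∈ Z → ∑ i, c i * a i t = 0) → c = 0) :
    Function.Injective (weightedGram μ a (dampedWeight a x)).mulVec := by
  have hxm := hx.aestronglyMeasurable
  set Z := {t | 0 < hxm.mk x t}
  have hZ : MeasurableSet Z :=
    measurableSet_lt measurable_const hxm.stronglyMeasurable_mk.measurable
  have hZpos : 0 < μ Z := by
    refine pos_iff_ne_zero.2 fun h => hxne ?_
    filter_upwards [measure_eq_zero_iff_ae_notMem.1 h, hx0, hxm.ae_eq_mk] with t hnot hpos hmk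
    exact le_antisymm (hmk ▸ not_lt.1 hnot) hpos
  refine weightedGram_mulVec_injective (integrable_mul_mul_dampedWeight ha hx hx0)
    (hx0.mono fun t ht => dampedWeight_nonneg ht) ?_ (hindep Z hZ hZpos)
  filter_upwards [hxm.ae_eq_mk] with t hmk htZ
  exact dampedWeight_pos (hmk ▸ htZ)

end DampedWeight

section Truncation

variable {T : Type*} {f x : T → ℝ}

theorem abs_mul_min_le {t : T} (hx : 0 ≤ x t) {k : ℝ} (hk : 0 ≤ k) :
    |f t * min (x t) k| ≤ |f t| * x t := by
  rw [abs_mul, abs_of_nonneg (le_min hx hk)]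
  exact mul_le_mul_of_nonneg_left (min_le_left _ _) (abs_nonneg _)

variable [MeasurableSpace T] {μ : Measure T}

theorem integrable_mul_min (hf : AEStronglyMeasurable f μ) (hx : AEStronglyMeasurable x μ)
    (hx0 : 0 ≤ᵐ[μ] x) (hfx : Integrable (fun t => |f t| * x t) μ) {k : ℝ} (hk : 0 ≤ k) :
    Integrable (fun t => f t * min (x t) k) μ :=
  hfx.mono' (hf.mul (hx.inf aestronglyMeasurable_const))
    (hx0.mono fun _ ht => abs_mul_min_le ht hk)

theorem tendsto_integral_mul_min (hf : AEStronglyMeasurable f μ) (hx : AEStronglyMeasurable x μ)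
    (hx0 : 0 ≤ᵐ[μ] x) (hfx : Integrable (fun t => |f t| * x t) μ) :
    Tendsto (fun k : ℕ => ∫ t, f t * min (x t) k ∂μ) atTop (𝓝 (∫ t, f t * x t ∂μ)) := by
  refine tendsto_integral_of_dominated_convergence _
    (fun k => hf.mul (hx.inf aestronglyMeasurable_const)) hfx
    (fun k => hx0.mono fun _ ht => abs_mul_min_le ht k.cast_nonneg) (ae_of_all _ fun t => ?_)
  obtain ⟨N, hN⟩ := exists_nat_ge (x t)
  refine tendsto_const_nhds.congr' ?_
  filter_upwards [eventually_ge_atTop N] with k hk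
  rw [min_eq_left (hN.trans (Nat.cast_le.2 hk))]

end Truncation

theorem exists_bounded_perturbation_general {T : Type*} [MeasurableSpace T]
    (μ : Measure T)
    {ι : Type*} [Fintype ι] (a : ι → T → ℝ) (ha : ∀ i, Integrable (a i) μ)
    (x : T → ℝ) (hx : Integrable x μ) (hx0 : ∀ᵐ t ∂μ, 0 ≤ x t)
    (hxne : ¬ (x =ᵐ[μ] 0))
    (hax : ∀ i, Integrable (fun t => |a i t| * x t) μ)
    (hindep : ∀ Z : Set T, MeasurableSet Z → 0 < μ Z →
      ∀ c : ι → ℝ, (∀ᵐ t ∂μ, t ∈ Z → ∑ i, c i * a i t = 0) → c = 0) :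
    ∃ (y : ℕ → T → ℝ) (k₀ : ℕ), ∀ k ≥ k₀,
      MemLp (y k) ⊤ μ ∧
      (∀ᵐ t ∂μ, 0 ≤ min (x t) (k : ℝ) + y k t) ∧
      (∀ i, ∫ t, a i t * (min (x t) (k : ℝ) + y k t) ∂μ = ∫ t, a i t * x t ∂μ) ∧
      (∀ᵐ t ∂μ, |y k t| ≤ x t) ∧
      (∀ᵐ t ∂μ, Tendsto (fun k => y k t) atTop (nhds 0)) := by
  have ham i := (ha i).aestronglyMeasurable
  have hGint := integrable_mul_mul_dampedWeight ham hx hx0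
  set ε : ℕ → ι → ℝ := fun k i => ∫ t, a i t * x t ∂μ - ∫ t, a i t * min (x t) k ∂μ
  have hε : Tendsto ε atTop (𝓝 0) := tendsto_pi_nhds.2 fun i => by
    simpa using (tendsto_integral_mul_min (ham i) hx.1 hx0 (hax i)).const_sub
      (∫ t, a i t * x t ∂μ)
  obtain ⟨d, hGd, hd⟩ := exists_tendsto_zero_mulVec_eq
    (weightedGram_dampedWeight_mulVec_injective ham hx hx0 hxne hindep) hε
  obtain ⟨k₀, hk₀⟩ := eventually_atTop.1
    ((eventually_ge_atTop 1).and (eventually_ae_abs_sum_mul_dampedWeight_le hx0 hd))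
  refine ⟨fun k t => (∑ j, d k j * a j t) * dampedWeight a x t, k₀, fun k hk => ?_⟩
  obtain ⟨hk1, hy⟩ := hk₀ k hk
  refine ⟨memLp_top_sum_mul_dampedWeight ham hx.1 hx0 (d k), ?_, fun i => ?_,
    hy.mono fun t ht => ht.trans (min_le_left _ _), ae_of_all _ fun t => ?_⟩
  · filter_upwards [hy] with t ht
    linarith [neg_abs_le ((∑ j, d k j * a j t) * dampedWeight a x t),
      min_le_min_left (x t) (Nat.one_le_cast.2 hk1 : (1 : ℝ) ≤ k)]
  · simp_rw [mul_add]
    rw [integral_add (integrable_mul_min (ham i) hx.1 hx0 (hax i) k.cast_nonneg)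
      (integrable_mul_sum_mul hGint _ i), ← weightedGram_mulVec hGint, hGd]
    ring
  · simpa using (tendsto_finsetSum _ fun j _ =>
      (tendsto_pi_nhds.1 hd j).mul_const (a j t)).mul_const (dampedWeight a x t)

/-- Lemma 1 (after Borwein–Lewis): given `x ∈ L¹₊(μ) \ {0}` and finitely many
    `a_i ∈ L¹(μ)` with `∫|a_i| x dμ < ∞`, linearly independent on every subset of
    positive measure, there are essentially bounded `y_k` with `min(x,k) + y_k ≥ 0` a.e.,
    the same moments as `x`, `|y_k| ≤ x` and `y_k → 0` a.e. -/
theorem exists_bounded_perturbation {T : Type*} [MeasurableSpace T]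
    (μ : Measure T) [IsFiniteMeasure μ]
    {ι : Type*} [Fintype ι] (a : ι → T → ℝ) (ha : ∀ i, Integrable (a i) μ)
    (x : T → ℝ) (hx : Integrable x μ) (hx0 : ∀ᵐ t ∂μ, 0 ≤ x t)
    (hxne : ¬ (x =ᵐ[μ] 0))
    (hax : ∀ i, Integrable (fun t => |a i t| * x t) μ)
    (hindep : ∀ Z : Set T, MeasurableSet Z → 0 < μ Z →
      ∀ c : ι → ℝ, (∀ᵐ t ∂μ, t ∈ Z → ∑ i, c i * a i t = 0) → c = 0) :
    ∃ (y : ℕ → T → ℝ) (k₀ : ℕ), ∀ k ≥ k₀,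
      MemLp (y k) ⊤ μ ∧
      (∀ᵐ t ∂μ, 0 ≤ min (x t) (k : ℝ) + y k t) ∧
      (∀ i, ∫ t, a i t * (min (x t) (k : ℝ) + y k t) ∂μ = ∫ t, a i t * x t ∂μ) ∧
      (∀ᵐ t ∂μ, |y k t| ≤ x t) ∧
      (∀ᵐ t ∂μ, Tendsto (fun k => y k t) atTop (nhds 0)) :=
  exists_bounded_perturbation_general μ a ha x hx hx0 hxne hax hindep
end

section
/- Let f : ℝ^d → ℝ be continuous and convex such that for every unit vector v, lim_{r→∞} f(r v) = ∞. Then there exists a compact set K ⊂ ℝ^d with inf_{ℝ^d} f = inf_K f; in particular f attains its infimum. -/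
open Filter

/-- A continuous convex function on `ℝ^d` tending to `∞` along every ray attains
    its infimum on a compact set; in particular it attains its infimum. -/
theorem convex_coercive_attains_min (d : ℕ) (f : EuclideanSpace ℝ (Fin d) → ℝ)
    (hcont : Continuous f) (hconv : ConvexOn ℝ Set.univ f)
    (hcoerc : ∀ v : EuclideanSpace ℝ (Fin d), ‖v‖ = 1 →
      Tendsto (fun r : ℝ => f (r • v)) atTop atTop) :
    (∃ K : Set (EuclideanSpace ℝ (Fin d)), IsCompact K ∧ K.Nonempty ∧
      sInf (f '' K) = sInf (Set.range f)) ∧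
    ∃ x₀, ∀ x, f x₀ ≤ f x := by
  -- basic convexity inequality along segments from 0
  have key : ∀ (x : EuclideanSpace ℝ (Fin d)) (t : ℝ), 0 ≤ t → t ≤ 1 →
      f (t • x) ≤ (1 - t) * f 0 + t * f x := by
    intro x t ht0 ht1
    have h := hconv.2 (Set.mem_univ (0 : EuclideanSpace ℝ (Fin d))) (Set.mem_univ x)
      (by linarith : (0:ℝ) ≤ 1 - t) ht0 (by ring)
    simpa using h
  -- monotonicity of the growth condition along rays
  have mono : ∀ (v : EuclideanSpace ℝ (Fin d)) (n m : ℕ), 1 ≤ n → n ≤ m →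
      f 0 + 1 < f ((n : ℝ) • v) → f 0 + 1 < f ((m : ℝ) • v) := by
    intro v n m hn hnm hfn
    have hm : (0:ℝ) < m := by exact_mod_cast lt_of_lt_of_le hn hnm
    set t : ℝ := (n : ℝ) / m with ht
    have ht0 : 0 < t := div_pos (by exact_mod_cast hn) hm
    have ht1 : t ≤ 1 := by
      rw [ht, div_le_one hm]; exact_mod_cast hnm
    have heq : t • ((m : ℝ) • v) = (n : ℝ) • v := by
      rw [smul_smul, ht, div_mul_cancel₀]
      exact ne_of_gt hm
    have h := key ((m : ℝ) • v) t ht0.le ht1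
    rw [heq] at h
    nlinarith [h, hfn, ht0, ht1]
  -- uniform coercivity radius via compactness of the sphere
  obtain ⟨N, hN1, hN⟩ : ∃ N : ℕ, 1 ≤ N ∧ ∀ v : EuclideanSpace ℝ (Fin d), ‖v‖ = 1 →
      f 0 + 1 < f ((N : ℝ) • v) := by
    set U : ℕ → Set (EuclideanSpace ℝ (Fin d)) :=
      fun n => {v | f 0 + 1 < f ((n : ℝ) • v)} with hU
    have hUopen : ∀ n : ℕ, IsOpen (U n) := fun n =>
      isOpen_lt continuous_const (hcont.comp (continuous_const_smul _))
    have hcover : Metric.sphere (0 : EuclideanSpace ℝ (Fin d)) 1 ⊆ ⋃ n, U n := by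
      intro v hv
      have hv1 : ‖v‖ = 1 := by simpa using hv
      have := (hcoerc v hv1).eventually_gt_atTop (f 0 + 1)
      obtain ⟨r₀, hr₀⟩ := eventually_atTop.mp this
      refine Set.mem_iUnion.mpr ⟨⌈r₀⌉₊, ?_⟩
      exact hr₀ _ (Nat.le_ceil r₀)
    obtain ⟨s, hs⟩ := (isCompact_sphere (0 : EuclideanSpace ℝ (Fin d)) 1).elim_finite_subcover
      U hUopen hcover
    refine ⟨max (s.sup id) 1, le_max_right _ _, ?_⟩
    intro v hv1
    have hvs : v ∈ Metric.sphere (0 : EuclideanSpace ℝ (Fin d)) 1 := by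
      simpa [Metric.mem_sphere] using hv1
    obtain ⟨n, hns, hvn⟩ := Set.mem_iUnion₂.mp (hs hvs)
    have hn1 : 1 ≤ n := by
      by_contra h
      have : n = 0 := by omega
      subst this
      simp only [U, Nat.cast_zero, zero_smul, Set.mem_setOf_eq] at hvn
      linarith
    exact mono v n _ hn1 (le_trans (Finset.le_sup (f := id) hns) (le_max_left _ _)) hvn
  -- points outside the ball of radius N have large values
  have hout : ∀ x : EuclideanSpace ℝ (Fin d), (N : ℝ) < ‖x‖ → f 0 + 1 < f x := by
    intro x hx
    have hN0 : (0:ℝ) < N := by exact_mod_cast hN1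
    have hx0 : (0:ℝ) < ‖x‖ := lt_trans hN0 hx
    set v : EuclideanSpace ℝ (Fin d) := ‖x‖⁻¹ • x with hv
    have hv1 : ‖v‖ = 1 := by
      rw [hv, norm_smul, norm_inv, norm_norm, inv_mul_cancel₀ (ne_of_gt hx0)]
    set t : ℝ := (N : ℝ) / ‖x‖ with ht
    have ht0 : 0 < t := div_pos hN0 hx0
    have ht1 : t ≤ 1 := by rw [ht, div_le_one hx0]; exact hx.le
    have heq : t • x = (N : ℝ) • v := by
      rw [hv, ht, smul_smul, div_eq_mul_inv]
    have h := key x t ht0.le ht1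
    rw [heq] at h
    have hNv := hN v hv1
    nlinarith [h, hNv, ht0, ht1]
  -- minimize on the closed ball
  set K : Set (EuclideanSpace ℝ (Fin d)) := Metric.closedBall 0 N with hK
  have hKc : IsCompact K := isCompact_closedBall 0 N
  have hKne : K.Nonempty := ⟨0, by simp [hK]⟩
  obtain ⟨x₀, hx₀K, hx₀⟩ := hKc.exists_isMinOn hKne hcont.continuousOn
  have h0K : (0 : EuclideanSpace ℝ (Fin d)) ∈ K := by simp [hK]
  have hmin : ∀ x, f x₀ ≤ f x := by
    intro x
    by_cases hx : ‖x‖ ≤ N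
    · exact hx₀ (by simpa [hK, Metric.mem_closedBall, dist_zero_right] using hx)
    · have := hout x (lt_of_not_ge hx)
      have h0 : f x₀ ≤ f 0 := hx₀ h0K
      linarith
  refine ⟨⟨K, hKc, hKne, ?_⟩, x₀, hmin⟩
  have h1 : sInf (f '' K) = f x₀ := by
    apply le_antisymm
    · exact csInf_le ⟨f x₀, by rintro _ ⟨x, _, rfl⟩; exact hmin x⟩ ⟨x₀, hx₀K, rfl⟩
    · exact le_csInf ⟨f x₀, x₀, hx₀K, rfl⟩ (by rintro _ ⟨x, _, rfl⟩; exact hmin x)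
  have h2 : sInf (Set.range f) = f x₀ := by
    apply le_antisymm
    · exact csInf_le ⟨f x₀, by rintro _ ⟨x, rfl⟩; exact hmin x⟩ ⟨x₀, rfl⟩
    · exact le_csInf ⟨f x₀, x₀, rfl⟩ (by rintro _ ⟨x, rfl⟩; exact hmin x)
  rw [h1, h2]
end

section
/- Let μ be a finite measure on T, (a_i)_{i∈I} integrable functions, g = (g_i) real numbers, and suppose x_* = e^{∑_i λ*_i a_i − 1} satisfies the moment equations ∫_T a_i x_* dμ = g_i for all i ∈ I, with x_* ln x_* ∈ L¹(μ). Then for every bounded measurable x ≥ 0 satisfying ∫_T a_i x dμ = g_i for all i, one has ∫_T x_* ln x_* dμ ≤ ∫_T x ln x dμ. That is, x_* minimizes the relative entropy integral among all bounded nonnegative solutions of the moment equations. -/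
/-!
The entropy density `φ(s) = s log s` is convex with `φ'(s) = log s + 1`, so at every point the
graph of `φ` lies above its tangent line at `x_*(t) = e^{y(t) - 1}`, `y = ∑ λ*_i a_i`, whose slope
is exactly `y(t)`:  `x log x ≥ x_* log x_* + y (x - x_*)`. Integrating, the correction term
`∫ y x - ∫ y x_*` vanishes because `x` and `x_*` have the same moments `∫ a_i · dμ = g_i`.
-/

open MeasureTheory Real

theorem mul_log_tangent_le {x x₀ : ℝ} (hx : 0 ≤ x) (hx₀ : 0 < x₀) :
    x₀ * log x₀ + (log x₀ + 1) * (x - x₀) ≤ x * log x := by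
  rcases hx.eq_or_lt with rfl | hx
  · simp only [zero_mul, zero_sub]; linarith
  · have hratio : x / x₀ - 1 ≤ x / x₀ * log (x / x₀) :=
      self_sub_one_le_mul_log (by positivity)
    rw [log_div hx.ne' hx₀.ne', div_mul_eq_mul_div, div_sub_one hx₀.ne',
      div_le_div_iff_of_pos_right hx₀] at hratio
    nlinarith

section

variable {T : Type*} [MeasurableSpace T] {μ : Measure T}

theorem integrable_mul_log_of_bounded [IsFiniteMeasure μ] {x : T → ℝ}
    (hx : AEStronglyMeasurable x μ) {C : ℝ} (hC : ∀ᵐ t ∂μ, |x t| ≤ C) :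
    Integrable (fun t => x t * log (x t)) μ := by
  obtain ⟨M, hM⟩ := (isCompact_Icc (a := -C) (b := C)).exists_bound_of_continuousOn
    continuous_mul_log.continuousOn
  refine .of_bound (continuous_mul_log.comp_aestronglyMeasurable hx) M ?_
  filter_upwards [hC] with t ht using hM _ (abs_le.mp ht)

variable {ι : Type*} (s : Finset ι) (c : ι → ℝ) {a : ι → T → ℝ} {f : T → ℝ}

theorem integrable_sum_mul (hf : ∀ i ∈ s, Integrable (fun t => a i t * f t) μ) :
    Integrable (fun t => (∑ i ∈ s, c i * a i t) * f t) μ := by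
  simp_rw [Finset.sum_mul, mul_assoc]
  exact integrable_finsetSum _ fun i hi => (hf i hi).const_mul (c i)

theorem integral_sum_mul (hf : ∀ i ∈ s, Integrable (fun t => a i t * f t) μ) :
    ∫ t, (∑ i ∈ s, c i * a i t) * f t ∂μ = ∑ i ∈ s, c i * ∫ t, a i t * f t ∂μ := by
  simp_rw [Finset.sum_mul, mul_assoc]
  rw [integral_finsetSum _ fun i hi => (hf i hi).const_mul (c i)]
  simp_rw [integral_const_mul]

theorem integral_mul_log_exp_sub_one_le {x y : T → ℝ} (hx : 0 ≤ᵐ[μ] x)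
    (hlog : Integrable (fun t => exp (y t - 1) * log (exp (y t - 1))) μ)
    (hy_exp : Integrable (fun t => y t * exp (y t - 1)) μ)
    (hy_x : Integrable (fun t => y t * x t) μ) (hxlog : Integrable (fun t => x t * log (x t)) μ)
    (hmom : ∫ t, y t * x t ∂μ = ∫ t, y t * exp (y t - 1) ∂μ) :
    ∫ t, exp (y t - 1) * log (exp (y t - 1)) ∂μ ≤ ∫ t, x t * log (x t) ∂μ := by
  have hdiff : Integrable (fun t => y t * x t - y t * exp (y t - 1)) μ := hy_x.sub hy_exp
  have htangent : ∀ᵐ t ∂μ, exp (y t - 1) * log (exp (y t - 1)) +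
      (y t * x t - y t * exp (y t - 1)) ≤ x t * log (x t) := by
    filter_upwards [hx] with t hxt
    have := mul_log_tangent_le hxt (exp_pos (y t - 1))
    simp only [log_exp, sub_add_cancel] at this ⊢
    linarith
  calc ∫ t, exp (y t - 1) * log (exp (y t - 1)) ∂μ
      = ∫ t, exp (y t - 1) * log (exp (y t - 1)) ∂μ +
          (∫ t, y t * x t ∂μ - ∫ t, y t * exp (y t - 1) ∂μ) := by
        rw [hmom, sub_self, add_zero]
    _ = ∫ t, exp (y t - 1) * log (exp (y t - 1)) + (y t * x t - y t * exp (y t - 1)) ∂μ := by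
        rw [integral_add hlog hdiff, integral_sub hy_x hy_exp]
    _ ≤ ∫ t, x t * log (x t) ∂μ := integral_mono_ae (hlog.add hdiff) hxlog htangent

end

theorem exp_density_minimizes_entropy_integral_general {T : Type*} [MeasurableSpace T]
    (μ : Measure T) [IsFiniteMeasure μ]
    {ι : Type*} [Fintype ι] (a : ι → T → ℝ)
    (g : ι → ℝ) (lam : ι → ℝ)
    (hxstar_mom : ∀ i, Integrable
      (fun t => a i t * Real.exp (∑ j, lam j * a j t - 1)) μ)
    (hmom : ∀ i, ∫ t, a i t * Real.exp (∑ j, lam j * a j t - 1) ∂μ = g i)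
    (hlog : Integrable (fun t =>
      Real.exp (∑ j, lam j * a j t - 1) *
        Real.log (Real.exp (∑ j, lam j * a j t - 1))) μ) :
    ∀ x : T → ℝ, Measurable x → (∀ t, 0 ≤ x t) → (∃ C : ℝ, ∀ t, x t ≤ C) →
      (∀ i, Integrable (fun t => a i t * x t) μ) →
      (∀ i, ∫ t, a i t * x t ∂μ = g i) →
      ∫ t, Real.exp (∑ j, lam j * a j t - 1) *
          Real.log (Real.exp (∑ j, lam j * a j t - 1)) ∂μ
        ≤ ∫ t, x t * Real.log (x t) ∂μ := by
  intro x hxm hx0 ⟨C, hxC⟩ hax hmomx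
  have hxlog : Integrable (fun t => x t * log (x t)) μ :=
    integrable_mul_log_of_bounded hxm.aestronglyMeasurable
      (.of_forall fun t => abs_le.mpr ⟨by linarith [hx0 t, hxC t], hxC t⟩)
  refine integral_mul_log_exp_sub_one_le (.of_forall hx0) hlog
    (integrable_sum_mul _ lam fun i _ => hxstar_mom i) (integrable_sum_mul _ lam fun i _ => hax i)
    hxlog ?_
  rw [integral_sum_mul _ lam fun i _ => hax i, integral_sum_mul _ lam fun i _ => hxstar_mom i]
  simp only [hmom, hmomx]

/-- If `x_* = e^{∑_i λ*_i a_i − 1}` satisfies the moment equations and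
    `x_* ln x_* ∈ L¹(μ)`, then `x_*` minimizes `∫ x ln x dμ` among all bounded
    measurable nonnegative solutions of the moment equations. -/
theorem exp_density_minimizes_entropy_integral {T : Type*} [MeasurableSpace T]
    (μ : Measure T) [IsFiniteMeasure μ]
    {ι : Type*} [Fintype ι] (a : ι → T → ℝ) (ha : ∀ i, Integrable (a i) μ)
    (g : ι → ℝ) (lam : ι → ℝ)
    (hxstar_mom : ∀ i, Integrable
      (fun t => a i t * Real.exp (∑ j, lam j * a j t - 1)) μ)
    (hmom : ∀ i, ∫ t, a i t * Real.exp (∑ j, lam j * a j t - 1) ∂μ = g i)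
    (hlog : Integrable (fun t =>
      Real.exp (∑ j, lam j * a j t - 1) *
        Real.log (Real.exp (∑ j, lam j * a j t - 1))) μ) :
    ∀ x : T → ℝ, Measurable x → (∀ t, 0 ≤ x t) → (∃ C : ℝ, ∀ t, x t ≤ C) →
      (∀ i, Integrable (fun t => a i t * x t) μ) →
      (∀ i, ∫ t, a i t * x t ∂μ = g i) →
      ∫ t, Real.exp (∑ j, lam j * a j t - 1) *
          Real.log (Real.exp (∑ j, lam j * a j t - 1)) ∂μ
        ≤ ∫ t, x t * Real.log (x t) ∂μ :=
  exp_density_minimizes_entropy_integral_general μ a g lam hxstar_mom hmom hlog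
end

section
/- Let μ be a finite measure on a set T of positive measure, and let (a_i)_{i∈I} be measurable functions linearly independent on every subset of positive μ-measure. Then the function λ ↦ ∫_T e^{∑_{i∈I} λ_i a_i(t)} dμ(t), wherever finite on all of ℝ^I, is strictly convex on ℝ^I; consequently the Lagrangian L(λ) = ∑_i g_i λ_i − ∫_T e^{∑_i λ_i a_i − 1} dμ has at most one maximizer. -/
open MeasureTheory

/-- If `(a_i)` are linearly independent on every subset of positive measure of `T`
    (with `μ ≠ 0` finite) and all the exponential integrals are finite, then
    `λ ↦ ∫ e^{∑ λ_i a_i} dμ` is strictly convex; consequently the Lagrangian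
    `L(λ) = ∑ g_i λ_i − ∫ e^{∑ λ_i a_i − 1} dμ` has at most one maximizer. -/
theorem exp_integral_strictConvex_and_unique_maximizer {T : Type*} [MeasurableSpace T]
    (μ : Measure T) [IsFiniteMeasure μ] (hμ : μ ≠ 0)
    {ι : Type*} [Fintype ι] (a : ι → T → ℝ) (ha : ∀ i, Measurable (a i))
    (hindep : ∀ Z : Set T, MeasurableSet Z → 0 < μ Z →
      ∀ c : ι → ℝ, (∀ᵐ t ∂μ, t ∈ Z → ∑ i, c i * a i t = 0) → c = 0)
    (hint : ∀ l : ι → ℝ, Integrable (fun t => Real.exp (∑ i, l i * a i t)) μ)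
    (g : ι → ℝ) :
    StrictConvexOn ℝ Set.univ
      (fun l : ι → ℝ => ∫ t, Real.exp (∑ i, l i * a i t) ∂μ) ∧
    ∀ lam₁ lam₂ : ι → ℝ,
      (∀ l : ι → ℝ,
        (∑ i, g i * l i) - ∫ t, Real.exp (∑ i, l i * a i t - 1) ∂μ ≤
        (∑ i, g i * lam₁ i) - ∫ t, Real.exp (∑ i, lam₁ i * a i t - 1) ∂μ) →
      (∀ l : ι → ℝ,
        (∑ i, g i * l i) - ∫ t, Real.exp (∑ i, l i * a i t - 1) ∂μ ≤
        (∑ i, g i * lam₂ i) - ∫ t, Real.exp (∑ i, lam₂ i * a i t - 1) ∂μ) →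
      lam₁ = lam₂ := by
  have key : StrictConvexOn ℝ Set.univ
      (fun l : ι → ℝ => ∫ t, Real.exp (∑ i, l i * a i t) ∂μ) := by
    refine ⟨convex_univ, ?_⟩
    intro x _ y _ hxy p q hp hq hpq
    set u : T → ℝ := fun t => ∑ i, x i * a i t with hu
    set v : T → ℝ := fun t => ∑ i, y i * a i t with hv
    have hcomb : ∀ t, ∑ i, (p • x + q • y) i * a i t = p * u t + q * v t := by
      intro t
      simp only [hu, hv, Pi.add_apply, Pi.smul_apply, smul_eq_mul, Finset.mul_sum]
      rw [← Finset.sum_add_distrib]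
      exact Finset.sum_congr rfl fun i _ => by ring
    have hi1 : Integrable (fun t => Real.exp (u t)) μ := hint x
    have hi2 : Integrable (fun t => Real.exp (v t)) μ := hint y
    have hi3 : Integrable (fun t => Real.exp (p * u t + q * v t)) μ := by
      have := hint (p • x + q • y)
      simpa only [hcomb] using this
    set h : T → ℝ := fun t =>
      (p * Real.exp (u t) + q * Real.exp (v t)) - Real.exp (p * u t + q * v t) with hh
    have hnonneg : ∀ t, 0 ≤ h t := by
      intro t
      have := convexOn_exp.2 (Set.mem_univ (u t)) (Set.mem_univ (v t)) hp.le hq.le hpq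
      simp only [smul_eq_mul] at this
      simp only [hh]; linarith
    have hint_h : Integrable h μ := ((hi1.const_mul p).add (hi2.const_mul q)).sub hi3
    have hμuniv : 0 < μ Set.univ := Measure.measure_univ_pos.2 hμ
    have hne0 : μ {t | u t ≠ v t} ≠ 0 := by
      intro h0
      have haeeq : ∀ᵐ t ∂μ, u t = v t := by
        rw [ae_iff]; simpa using h0
      have hae : ∀ᵐ t ∂μ, t ∈ (Set.univ : Set T) → ∑ i, (x - y) i * a i t = 0 := by
        filter_upwards [haeeq] with t ht _
        simp only [Pi.sub_apply, sub_mul, Finset.sum_sub_distrib]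
        change u t - v t = 0
        rw [ht, sub_self]
      have := hindep Set.univ MeasurableSet.univ hμuniv (x - y) hae
      exact hxy (sub_eq_zero.mp this)
    have hsupp : {t | u t ≠ v t} ⊆ Function.support h := by
      intro t ht
      have hlt := strictConvexOn_exp.2 (Set.mem_univ (u t)) (Set.mem_univ (v t)) ht hp hq hpq
      simp only [smul_eq_mul] at hlt
      simp only [Function.mem_support, hh]
      intro hzero; linarith
    have hpos : 0 < ∫ t, h t ∂μ := by
      refine (integral_pos_iff_support_of_nonneg_ae (ae_of_all _ hnonneg) hint_h).2 ?_
      exact lt_of_lt_of_le (pos_iff_ne_zero.mpr hne0) (measure_mono hsupp)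
    have hint_eq : ∫ t, h t ∂μ =
        (p * ∫ t, Real.exp (u t) ∂μ + q * ∫ t, Real.exp (v t) ∂μ)
          - ∫ t, Real.exp (p * u t + q * v t) ∂μ := by
      have hi12 : Integrable (fun t => p * Real.exp (u t) + q * Real.exp (v t)) μ :=
        (hi1.const_mul p).add (hi2.const_mul q)
      rw [hh]
      rw [integral_sub hi12 hi3,
        integral_add (hi1.const_mul p) (hi2.const_mul q),
        MeasureTheory.integral_const_mul, MeasureTheory.integral_const_mul]
    have hgoal : ∫ t, Real.exp (∑ i, (p • x + q • y) i * a i t) ∂μ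
        = ∫ t, Real.exp (p * u t + q * v t) ∂μ := by
      simp only [hcomb]
    simp only [smul_eq_mul]
    rw [hgoal]
    rw [hint_eq] at hpos
    linarith
  refine ⟨key, ?_⟩
  intro lam₁ lam₂ h1 h2
  by_contra hne
  set F : (ι → ℝ) → ℝ := fun l => ∫ t, Real.exp (∑ i, l i * a i t) ∂μ with hF
  have hL : ∀ l : ι → ℝ, ∫ t, Real.exp (∑ i, l i * a i t - 1) ∂μ
      = F l * (Real.exp 1)⁻¹ := by
    intro l
    simp only [Real.exp_sub, div_eq_mul_inv, hF]
    rw [integral_mul_const]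
  set m : ι → ℝ := (1/2 : ℝ) • lam₁ + (1/2 : ℝ) • lam₂ with hm
  have hstrict : F m < (1/2) * F lam₁ + (1/2) * F lam₂ := by
    have := key.2 (Set.mem_univ lam₁) (Set.mem_univ lam₂) hne
      (by norm_num : (0:ℝ) < 1/2) (by norm_num : (0:ℝ) < 1/2) (by norm_num)
    simpa only [smul_eq_mul] using this
  have hlin : ∑ i, g i * m i = (1/2) * ∑ i, g i * lam₁ i + (1/2) * ∑ i, g i * lam₂ i := by
    simp only [hm, Pi.add_apply, Pi.smul_apply, smul_eq_mul, Finset.mul_sum]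
    rw [← Finset.sum_add_distrib]
    exact Finset.sum_congr rfl fun i _ => by ring
  have h12 := h1 lam₂
  have h21 := h2 lam₁
  have hm1 := h1 m
  simp only [hL] at h12 h21 hm1
  rw [hlin] at hm1
  have he : (0:ℝ) < (Real.exp 1)⁻¹ := by positivity
  have hmul : F m * (Real.exp 1)⁻¹ <
      ((1/2) * F lam₁ + (1/2) * F lam₂) * (Real.exp 1)⁻¹ :=
    mul_lt_mul_of_pos_right hstrict he
  nlinarith [hmul, h12, h21, hm1]
end

section
/- Let p be a polynomial on ℝ² with real coefficients such that u e^p and v e^p are rapidly decreasing for polynomials u, v (more precisely: ‖t‖·(|u(t)| + |v(t)|)·e^{p(t)} → 0 as ‖t‖ → ∞ and (|u|+|v|)e^p ∈ L¹(ℝ²)). If the polynomial q := v ∂₁p − u ∂₂p + ∂₁v − ∂₂u satisfies q e^p ∈ L¹(ℝ²), then ∫_{ℝ²} q(t) e^{p(t)} dt = 0. -/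
/-!
Since `q e^p = ∂₁(v e^p) + ∂₂(-u e^p)`, the integrand is the divergence of the field
`F = (v e^p, -u e^p)`. By the divergence theorem, its integral over the square `[-R, R]²` is a
sum of integrals of components of `F` over the four sides; each side has length `2R` and on it
`|F| = o(1/R)` by the decay hypothesis, so the boundary terms vanish as `R → ∞`, while the
integrals over the squares tend to the integral over the plane. The argument works verbatim in
`ℝⁿ⁺¹` under the decay `‖x‖ⁿ |F x| → 0`.
-/

open MeasureTheory Filter MvPolynomial Topology

section Divergence

variable {n : ℕ} {E : Type*} [NormedAddCommGroup E] [NormedSpace ℝ E]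

theorem aecover_Icc_pi {ι : Type*} [Fintype ι] :
    AECover (volume : Measure (ι → ℝ)) atTop fun R : ℝ =>
      Set.Icc (fun _ => -R) (fun _ => R) where
  ae_eventually_mem := ae_of_all _ fun x => by
    filter_upwards [eventually_ge_atTop ‖x‖] with R hR
    exact ⟨fun i => (abs_le.1 ((norm_le_pi_norm x i).trans hR)).1,
      fun i => (abs_le.1 ((norm_le_pi_norm x i).trans hR)).2⟩
  measurableSet _ := measurableSet_Icc

theorem norm_setIntegral_Icc_insertNth_le {φ : (Fin (n + 1) → ℝ) → E} {R C c : ℝ}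
    (hR : 0 < R) (hc : R ≤ |c|) (hφ : ∀ x, R ≤ ‖x‖ → ‖x‖ ^ n * ‖φ x‖ ≤ C) (i : Fin (n + 1)) :
    ‖∫ y in Set.Icc (fun _ => -R) (fun _ => R), φ (Fin.insertNth i c y)‖ ≤ 2 ^ n * C := by
  have hbound : ∀ y, ‖φ (Fin.insertNth i c y)‖ ≤ C / R ^ n := by
    intro y
    have hx : R ≤ ‖(Fin.insertNth i c y : Fin (n + 1) → ℝ)‖ := hc.trans (by
      simpa using norm_le_pi_norm (Fin.insertNth i c y : Fin (n + 1) → ℝ) i)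
    rw [le_div_iff₀ (by positivity), mul_comm]
    exact (mul_le_mul_of_nonneg_right (pow_le_pow_left₀ hR.le hx n) (norm_nonneg _)).trans
      (hφ _ hx)
  calc _ ≤ C / R ^ n * volume.real (Set.Icc (fun _ : Fin n => -R) (fun _ => R)) :=
        norm_setIntegral_le_of_norm_le_const isCompact_Icc.measure_lt_top fun y _ => hbound y
    _ = 2 ^ n * C := by
        rw [measureReal_def, Real.volume_Icc_pi_toReal fun _ => by linarith]
        simp only [Finset.prod_const, Finset.card_univ, Fintype.card_fin]
        field_simp
        ring

/-- `c R = R` and `c R = -R` give the two faces of `[-R, R]ⁿ⁺¹` orthogonal to the `i`-th axis. -/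
theorem tendsto_setIntegral_Icc_insertNth_zero {φ : (Fin (n + 1) → ℝ) → E}
    (hφ : Tendsto (fun x => ‖x‖ ^ n * ‖φ x‖) (cocompact _) (𝓝 0)) {c : ℝ → ℝ}
    (hc : ∀ R, R ≤ |c R|) (i : Fin (n + 1)) :
    Tendsto (fun R => ∫ y in Set.Icc (fun _ => -R) (fun _ => R), φ (Fin.insertNth i (c R) y))
      atTop (𝓝 0) := by
  rw [Metric.tendsto_nhds]
  intro ε hε
  have hδ : 0 < ε / 2 ^ (n + 1) := by positivity
  rw [← Metric.cobounded_eq_cocompact, ← comap_norm_atTop, Metric.tendsto_nhds] at hφ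
  obtain ⟨R₀, hR₀⟩ := eventually_atTop.1 (eventually_comap.1 (hφ _ hδ))
  filter_upwards [eventually_ge_atTop (max R₀ 1)] with R hR
  have hR1 : 0 < R := lt_of_lt_of_le one_pos ((le_max_right _ _).trans hR)
  rw [dist_zero_right]
  calc _ ≤ 2 ^ n * (ε / 2 ^ (n + 1)) := by
        refine norm_setIntegral_Icc_insertNth_le hR1 (hc R) (fun x hx => ?_) i
        have := hR₀ ‖x‖ (((le_max_left _ _).trans hR).trans hx) x rfl
        rw [Real.dist_eq, sub_zero, abs_of_nonneg (by positivity)] at this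
        exact this.le
    _ = ε / 2 := by rw [pow_succ]; field_simp
    _ < ε := half_lt_self hε

theorem integral_divergence_eq_zero_of_tendsto_cocompact
    (f : Fin (n + 1) → (Fin (n + 1) → ℝ) → E)
    (f' : Fin (n + 1) → (Fin (n + 1) → ℝ) → (Fin (n + 1) → ℝ) →L[ℝ] E)
    (hf : ∀ i x, HasFDerivAt (f i) (f' i x) x)
    (hdiv : Integrable fun x => ∑ i, f' i x (Pi.single i 1))
    (hdecay : ∀ i, Tendsto (fun x => ‖x‖ ^ n * ‖f i x‖) (cocompact _) (𝓝 0)) :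
    ∫ x, ∑ i, f' i x (Pi.single i 1) = 0 := by
  have hbox : ∀ R : ℝ, 0 ≤ R →
      ∫ x in Set.Icc (fun _ => -R) (fun _ => R), ∑ i, f' i x (Pi.single i 1) =
        ∑ i, ((∫ y in Set.Icc (fun _ => -R) (fun _ => R), f i (Fin.insertNth i R y)) -
          ∫ y in Set.Icc (fun _ => -R) (fun _ => R), f i (Fin.insertNth i (-R) y)) :=
    fun R hR => integral_divergence_of_hasFDerivAt_off_countable' _ _ (fun _ => by linarith)
      f f' ∅ Set.countable_empty (fun i x _ => (hf i x).continuousAt.continuousWithinAt)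
      (fun x _ i => hf i x) hdiv.integrableOn
  have hfaces := tendsto_finsetSum Finset.univ fun i _ =>
    (tendsto_setIntegral_Icc_insertNth_zero (hdecay i) (c := id) le_abs_self i).sub
      (tendsto_setIntegral_Icc_insertNth_zero (hdecay i) (c := Neg.neg)
        (fun R => (le_abs_self R).trans (abs_neg R).ge) i)
  simp only [sub_zero, Finset.sum_const_zero] at hfaces
  refine aecover_Icc_pi.integral_eq_of_tendsto _ hdiv (hfaces.congr' ?_)
  filter_upwards [eventually_ge_atTop 0] with R hR using (hbox R hR).symm

end Divergence

namespace MvPolynomial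

variable {σ : Type*} [Fintype σ] [DecidableEq σ] {n : ℕ}

theorem hasFDerivAt_eval {𝕜 : Type*} [NontriviallyNormedField 𝕜] (p : MvPolynomial σ 𝕜)
    (x : σ → 𝕜) :
    HasFDerivAt (𝕜 := 𝕜) (fun y => eval y p)
      (∑ i, eval x (pderiv i p) • ContinuousLinearMap.proj i) x := by
  induction p using MvPolynomial.induction_on with
  | C a =>
    simp only [eval_C]
    refine (hasFDerivAt_const (𝕜 := 𝕜) a x).congr_fderiv ?_
    ext y; simp
  | add p q hp hq =>
    simp only [map_add]
    refine (hp.add hq).congr_fderiv (ContinuousLinearMap.ext fun y => ?_)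
    simp [add_mul, Finset.sum_add_distrib]
  | mul_X p j hp =>
    simp only [eval_mul, eval_X]
    refine (hp.mul (hasFDerivAt_apply j x)).congr_fderiv (ContinuousLinearMap.ext fun y => ?_)
    simp [pderiv_X, Pi.single_apply, apply_ite, add_mul, ite_mul, Finset.sum_add_distrib,
      Finset.mul_sum, mul_assoc]

theorem hasFDerivAt_eval_mul_exp_eval (r p : MvPolynomial σ ℝ) (x : σ → ℝ) :
    HasFDerivAt (𝕜 := ℝ) (fun y => eval y r * Real.exp (eval y p))
      (∑ i, (eval x (pderiv i r + r * pderiv i p) * Real.exp (eval x p)) •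
        ContinuousLinearMap.proj i) x := by
  refine ((hasFDerivAt_eval r x).mul (hasFDerivAt_eval p x).exp).congr_fderiv
    (ContinuousLinearMap.ext fun y => ?_)
  simp only [add_apply, smul_apply, sum_apply, ContinuousLinearMap.proj_apply, smul_eq_mul,
    Finset.mul_sum, ← Finset.sum_add_distrib, map_add, map_mul]
  exact Finset.sum_congr rfl fun i _ => by ring

theorem integral_eval_mul_exp_eval_eq_zero (p : MvPolynomial (Fin (n + 1)) ℝ)
    (w : Fin (n + 1) → MvPolynomial (Fin (n + 1)) ℝ)
    (hint : Integrable fun x =>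
      eval x (∑ i, (pderiv i (w i) + w i * pderiv i p)) * Real.exp (eval x p))
    (hdecay : ∀ i, Tendsto (fun x => ‖x‖ ^ n * ‖eval x (w i) * Real.exp (eval x p)‖)
      (cocompact _) (𝓝 0)) :
    ∫ x, eval x (∑ i, (pderiv i (w i) + w i * pderiv i p)) * Real.exp (eval x p) = 0 := by
  have hdiv : ∀ x, eval x (∑ i, (pderiv i (w i) + w i * pderiv i p)) * Real.exp (eval x p) =
      ∑ i, (∑ j, (eval x (pderiv j (w i) + w i * pderiv j p) * Real.exp (eval x p)) •
        ContinuousLinearMap.proj (R := ℝ) (φ := fun _ => ℝ) j) (Pi.single i 1) := by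
    intro x
    simp [Finset.sum_mul, Pi.single_apply]
  simp only [hdiv] at hint ⊢
  exact integral_divergence_eq_zero_of_tendsto_cocompact _ _
    (fun i x => hasFDerivAt_eval_mul_exp_eval (w i) p x) hint hdecay

end MvPolynomial

theorem tendsto_norm_mul_cocompact_of_euclidean {ι : Type*} [Fintype ι]
    {g : EuclideanSpace ℝ ι → ℝ} {h : (ι → ℝ) → ℝ}
    (hg : Tendsto (fun t => ‖t‖ * g t) (cocompact _) (𝓝 0))
    (hh : ∀ x, ‖h x‖ ≤ g (WithLp.toLp 2 x)) :
    Tendsto (fun x => ‖x‖ * ‖h x‖) (cocompact _) (𝓝 0) := by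
  have htoLp : Tendsto (WithLp.toLp 2) (cocompact (ι → ℝ)) (cocompact (EuclideanSpace ℝ ι)) :=
    (PiLp.homeomorph 2 fun _ : ι => ℝ).symm.map_cocompact.le
  refine squeeze_zero (fun x => by positivity) (fun x => ?_) (hg.comp htoLp)
  have hnorm : ‖x‖ ≤ ‖WithLp.toLp 2 x‖ :=
    (pi_norm_le_iff_of_nonneg (norm_nonneg _)).2 fun j => PiLp.norm_apply_le (WithLp.toLp 2 x) j
  exact mul_le_mul hnorm (hh x) (norm_nonneg _) (norm_nonneg _)

theorem integral_divergence_exp_zero_general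
    (p u v : MvPolynomial (Fin 2) ℝ)
    (hdecay : Tendsto
      (fun t : EuclideanSpace ℝ (Fin 2) =>
        ‖t‖ * ((|eval (fun j => t j) u| + |eval (fun j => t j) v|) *
          Real.exp (eval (fun j => t j) p)))
      (cocompact (EuclideanSpace ℝ (Fin 2))) (nhds 0))
    (q : MvPolynomial (Fin 2) ℝ)
    (hq : q = v * pderiv 0 p - u * pderiv 1 p + pderiv 0 v - pderiv 1 u)
    (hqint : Integrable
      (fun t : EuclideanSpace ℝ (Fin 2) =>
        eval (fun j => t j) q * Real.exp (eval (fun j => t j) p)) volume) :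
    ∫ t : EuclideanSpace ℝ (Fin 2),
      eval (fun j => t j) q * Real.exp (eval (fun j => t j) p) = 0 := by
  obtain rfl : q = ∑ i, (pderiv i (![v, -u] i) + ![v, -u] i * pderiv i p) :=
    hq.trans (by
      simp only [Fin.sum_univ_two, Matrix.cons_val_zero, Matrix.cons_val_one, map_neg, neg_mul]
      ring)
  have hofLp := EuclideanSpace.volume_preserving_symm_measurableEquiv_toLp (Fin 2)
  refine (hofLp.integral_comp' (g := fun x => eval x _ * Real.exp (eval x p))).trans ?_
  refine integral_eval_mul_exp_eval_eq_zero p _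
    ((hofLp.integrable_comp_emb (MeasurableEquiv.measurableEmbedding _)).1 hqint) fun i => ?_
  simp only [pow_one]
  refine tendsto_norm_mul_cocompact_of_euclidean hdecay fun x => ?_
  have hcoeff : |eval x (![v, -u] i)| ≤ |eval x u| + |eval x v| := by
    fin_cases i <;> simp [abs_nonneg]
  rw [norm_mul, Real.norm_eq_abs, Real.norm_of_nonneg (Real.exp_pos _).le]
  gcongr

/-- Stokes-type identity: if `u e^p, v e^p` decay (with their norms times `‖t‖`
    tending to `0` at infinity) and are integrable, then
    `∫_{ℝ²} (v ∂₁p − u ∂₂p + ∂₁v − ∂₂u) e^p dt = 0`. -/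
theorem integral_divergence_exp_zero
    (p u v : MvPolynomial (Fin 2) ℝ)
    (hdecay : Tendsto
      (fun t : EuclideanSpace ℝ (Fin 2) =>
        ‖t‖ * ((|eval (fun j => t j) u| + |eval (fun j => t j) v|) *
          Real.exp (eval (fun j => t j) p)))
      (cocompact (EuclideanSpace ℝ (Fin 2))) (nhds 0))
    (hint : Integrable
      (fun t : EuclideanSpace ℝ (Fin 2) =>
        (|eval (fun j => t j) u| + |eval (fun j => t j) v|) *
          Real.exp (eval (fun j => t j) p)) volume)
    (q : MvPolynomial (Fin 2) ℝ)
    (hq : q = v * pderiv 0 p - u * pderiv 1 p + pderiv 0 v - pderiv 1 u)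
    (hqint : Integrable
      (fun t : EuclideanSpace ℝ (Fin 2) =>
        eval (fun j => t j) q * Real.exp (eval (fun j => t j) p)) volume) :
    ∫ t : EuclideanSpace ℝ (Fin 2),
      eval (fun j => t j) q * Real.exp (eval (fun j => t j) p) = 0 :=
  integral_divergence_exp_zero_general p u v hdecay q hq hqint
end
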